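/- arXiv:1101.1870 — 3 statements merged into one kernel-verified Lean document; each statement's English description precedes it below -/
import Mathlib

section
/- Let q be a positive integer coprime to 3. With Σ(3,q) = {i/3 + j/q : 1 ≤ i ≤ 2, 1 ≤ j ≤ q−1} and σ(3,q) = #Σ − 2·#(Σ ∩ (1/2,3/2)), one has σ(3,q) = 4·⌊q/6⌋ − 2(q−1). -/
/-- The multiset of pairs `(i,j)` with `1 ≤ i ≤ p-1`, `1 ≤ j ≤ q-1`. -/
def torusPairs (p q : ℕ) : Finset (ℕ × ℕ) :=
  Finset.Icc 1 (p - 1) ×ˢ Finset.Icc 1 (q - 1)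

/-- The value `i/p + j/q` associated to a pair. -/
def torusVal (p q : ℕ) (ij : ℕ × ℕ) : ℚ :=
  (ij.1 : ℚ) / p + (ij.2 : ℚ) / q

/-- Number of elements of the multiset `Σ(p,q)` lying in the open interval `(1/2, 3/2)`. -/
def torusInCount (p q : ℕ) : ℕ :=
  ((torusPairs p q).filter
    (fun ij => (1 : ℚ) / 2 < torusVal p q ij ∧ torusVal p q ij < 3 / 2)).card

/-- Combinatorial signature of the torus knot `T(p,q)`:
`#Σ − 2·#(Σ ∩ (1/2, 3/2))`. -/
def torusSig (p q : ℕ) : ℤ :=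
  ((torusPairs p q).card : ℤ) - 2 * (torusInCount p q : ℤ)

theorem stmt_1 (q : ℕ) (hq : 0 < q) (hcop : Nat.Coprime 3 q) :
    torusSig 3 q = 4 * ((q / 6 : ℕ) : ℤ) - 2 * ((q : ℤ) - 1) := by
  have hq3 : q % 3 ≠ 0 := by
    intro h
    have h3 : (3:ℕ) ∣ q := Nat.dvd_of_mod_eq_zero h
    have h1 : (3:ℕ) = 1 := Nat.eq_one_of_dvd_coprimes hcop (dvd_refl 3) h3
    omega
  have hqQ : (0:ℚ) < q := by exact_mod_cast hq
  have hq0 : (q:ℚ) ≠ 0 := ne_of_gt hqQ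
  have e1 : ∀ j ∈ Finset.Icc 1 (q-1),
      (((1:ℚ)/2 < 1/3 + (j:ℚ)/q ∧ (1:ℚ)/3 + (j:ℚ)/q < 3/2) ↔ q < 6*j) := by
    intro j hj
    simp only [Finset.mem_Icc] at hj
    have hjq : (j:ℚ) + 1 ≤ q := by exact_mod_cast (by omega : j + 1 ≤ q)
    rw [div_add_div _ _ (by norm_num : (3:ℚ) ≠ 0) hq0,
        div_lt_div_iff₀ (by norm_num) (by positivity),
        div_lt_div_iff₀ (by positivity) (by norm_num)]
    constructor
    · rintro ⟨h1, _⟩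
      exact_mod_cast (by linarith : (q:ℚ) < 6*j)
    · intro h
      have : (q:ℚ) < 6*j := by exact_mod_cast h
      constructor <;> nlinarith
  have e2 : ∀ j ∈ Finset.Icc 1 (q-1),
      (((1:ℚ)/2 < 2/3 + (j:ℚ)/q ∧ (2:ℚ)/3 + (j:ℚ)/q < 3/2) ↔ 6*j < 5*q) := by
    intro j hj
    simp only [Finset.mem_Icc] at hj
    rw [div_add_div _ _ (by norm_num : (3:ℚ) ≠ 0) hq0,
        div_lt_div_iff₀ (by norm_num) (by positivity),
        div_lt_div_iff₀ (by positivity) (by norm_num)]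
    constructor
    · rintro ⟨_, h2⟩
      exact_mod_cast (by linarith : (6:ℚ)*j < 5*q)
    · intro h
      have : (6:ℚ)*j < 5*q := by exact_mod_cast h
      have hj0 : (0:ℚ) ≤ j := by positivity
      constructor <;> nlinarith
  have hcount : torusInCount 3 q = ((q-1) - q/6) + (5*q-1)/6 := by
    unfold torusInCount torusPairs torusVal
    rw [Finset.card_filter, Finset.sum_product,
        show Finset.Icc 1 (3-1) = ({1, 2} : Finset ℕ) from rfl,
        Finset.sum_insert (by decide), Finset.sum_singleton]
    rw [← Finset.card_filter, ← Finset.card_filter]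
    simp only []
    push_cast
    rw [Finset.filter_congr e1, Finset.filter_congr e2]
    have f1 : (Finset.Icc 1 (q-1)).filter (fun j => q < 6*j) = Finset.Icc (q/6+1) (q-1) := by
      ext j
      simp only [Finset.mem_filter, Finset.mem_Icc]
      omega
    have f2 : (Finset.Icc 1 (q-1)).filter (fun j => 6*j < 5*q) = Finset.Icc 1 ((5*q-1)/6) := by
      ext j
      simp only [Finset.mem_filter, Finset.mem_Icc]
      omega
    rw [f1, f2, Nat.card_Icc, Nat.card_Icc]
    omega
  have hcard : (torusPairs 3 q).card = 2*(q-1) := by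
    simp [torusPairs, Nat.card_Icc, mul_comm]
  unfold torusSig
  rw [hcount, hcard]
  omega
end

section
/- Let q be a positive odd integer coprime to 4. With Σ(4,q) = {i/4 + j/q : 1 ≤ i ≤ 3, 1 ≤ j ≤ q−1} and σ(4,q) defined combinatorially as the signed count of elements outside minus inside (1/2,3/2), one has σ(4,q) = 4·⌊q/4⌋ − 3(q−1). -/
/-!
Clearing denominators, `i/p + j/q ∈ (1/2, 3/2)` becomes `pq < 2(iq + jp) < 3pq`, so `σ(p,q)` can be
computed one row `i` at a time. For `p = 4` the middle row lies entirely inside the interval, while the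
rows `i = 1` and `i = 3` each miss exactly the `⌊q/4⌋` values of `j` with `4j ≤ q`, resp. `4j ≥ 3q`.
-/

open Finset

lemma card_torusPairs (p q : ℕ) : #(torusPairs p q) = (p - 1) * (q - 1) := by
  simp [torusPairs]

lemma torusVal_mem_Ioo_iff {p q : ℕ} (hp : 0 < p) (hq : 0 < q) (ij : ℕ × ℕ) :
    (1 / 2 < torusVal p q ij ∧ torusVal p q ij < 3 / 2) ↔
      p * q < 2 * (ij.1 * q + ij.2 * p) ∧ 2 * (ij.1 * q + ij.2 * p) < 3 * (p * q) := by
  have hval : torusVal p q ij = ((ij.1 * q + ij.2 * p : ℕ) : ℚ) / (p * q) := by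
    rw [torusVal]
    push_cast
    field_simp
  rw [hval, lt_div_iff₀ (by positivity), div_lt_iff₀ (by positivity)]
  constructor <;> rintro ⟨h₁, h₂⟩ <;> constructor <;> qify at * <;> linarith

lemma torusInCount_eq_sum {p q : ℕ} (hp : 0 < p) (hq : 0 < q) :
    torusInCount p q = ∑ i ∈ Icc 1 (p - 1),
      #{j ∈ Icc 1 (q - 1) | p * q < 2 * (i * q + j * p) ∧ 2 * (i * q + j * p) < 3 * (p * q)} := by
  rw [torusInCount, filter_congr fun ij _ => torusVal_mem_Ioo_iff hp hq ij, card_filter,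
    torusPairs, sum_product]
  simp only [← card_filter]

lemma torusInCount_four {q : ℕ} (hq : 0 < q) : torusInCount 4 q = 3 * (q - 1) - 2 * (q / 4) := by
  have row₁ : {j ∈ Icc 1 (q - 1) | 4 * q < 2 * (1 * q + j * 4) ∧ 2 * (1 * q + j * 4) < 3 * (4 * q)}
      = Icc (q / 4 + 1) (q - 1) := by
    ext j; simp only [mem_filter, mem_Icc]; omega
  have row₂ : {j ∈ Icc 1 (q - 1) | 4 * q < 2 * (2 * q + j * 4) ∧ 2 * (2 * q + j * 4) < 3 * (4 * q)}
      = Icc 1 (q - 1) := by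
    ext j; simp only [mem_filter, mem_Icc]; omega
  have row₃ : {j ∈ Icc 1 (q - 1) | 4 * q < 2 * (3 * q + j * 4) ∧ 2 * (3 * q + j * 4) < 3 * (4 * q)}
      = Icc 1 (q - 1 - q / 4) := by
    ext j; simp only [mem_filter, mem_Icc]; omega
  rw [torusInCount_eq_sum (by norm_num) hq, show Icc 1 (4 - 1) = {1, 2, 3} by rfl,
    sum_insert (by decide), sum_insert (by decide), sum_singleton, row₁, row₂, row₃]
  simp only [Nat.card_Icc]
  omega

theorem stmt_2_general (q : ℕ) (hq : 0 < q) :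
    torusSig 4 q = 4 * ((q / 4 : ℕ) : ℤ) - 3 * ((q : ℤ) - 1) := by
  rw [torusSig, card_torusPairs, torusInCount_four hq]
  omega

theorem stmt_2 (q : ℕ) (hq : 0 < q) (hodd : Odd q) (hcop : Nat.Coprime 4 q) :
    torusSig 4 q = 4 * ((q / 4 : ℕ) : ℤ) - 3 * ((q : ℤ) - 1) :=
  stmt_2_general q hq
end

section
/- For coprime p, q > 1, the combinatorial torus-knot signature σ(p,q) = #Σ − 2·#(Σ∩(1/2,3/2)), where Σ = {i/p + j/q : 1 ≤ i < p, 1 ≤ j < q}, satisfies σ(p,q) = −pq/2 + O(p+q); precisely, |σ(p,q) + pq/2| ≤ C(p+q) for some absolute constant C. -/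
lemma cond_iff (p q : ℕ) (hp : 0 < p) (hq : 0 < q) (i j : ℕ) :
    ((1:ℚ)/2 < torusVal p q (i,j) ∧ torusVal p q (i,j) < 3/2) ↔
      (p*q < 2*(i*q+j*p) ∧ 2*(i*q+j*p) < 3*(p*q)) := by
  have hp' : (0:ℚ) < p := by exact_mod_cast hp
  have hq' : (0:ℚ) < q := by exact_mod_cast hq
  have hpq : (0:ℚ) < (p:ℚ)*q := by positivity
  have hv : torusVal p q (i,j) = ((i*q+j*p : ℕ) : ℚ) / ((p:ℚ)*q) := by
    unfold torusVal; push_cast; field_simp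
  rw [hv, div_lt_div_iff₀ (by norm_num) hpq, div_lt_div_iff₀ hpq (by norm_num)]
  constructor <;> rintro ⟨h1, h2⟩ <;> constructor <;>
    [skip; skip; skip; skip] <;>
    · rify at h1 h2 ⊢
      push_cast at h1 h2 ⊢
      linarith

lemma count_eq_sum (p q : ℕ) (hp : 0 < p) (hq : 0 < q) :
    torusInCount p q = ∑ i ∈ Finset.Icc 1 (p-1),
      ((Finset.Icc 1 (q-1)).filter
        (fun j => p*q < 2*(i*q+j*p) ∧ 2*(i*q+j*p) < 3*(p*q))).card := by
  unfold torusInCount torusPairs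
  rw [Finset.card_filter, Finset.sum_product]
  refine Finset.sum_congr rfl (fun i _ => ?_)
  rw [Finset.card_filter]
  refine Finset.sum_congr rfl (fun j _ => ?_)
  congr 1
  simp only [eq_iff_iff]
  exact cond_iff p q hp hq i j

lemma per_i_case1 (p q i : ℕ) (hp : 1 < p) (hq : 1 < q) (hi1 : 1 ≤ i) (hi2 : 2*i ≤ p) :
    (Finset.Icc 1 (q-1)).filter
        (fun j => p*q < 2*(i*q+j*p) ∧ 2*(i*q+j*p) < 3*(p*q))
      = Finset.Icc (q*(p-2*i)/(2*p) + 1) (q-1) := by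
  have hp0 : 0 < 2*p := by omega
  have key : ∀ j : ℕ, (q*(p-2*i) < j*(2*p)) ↔ p*q < 2*(i*q+j*p) := by
    intro j
    zify [hi2]
    constructor <;> intro h <;> nlinarith [h]
  have auto : ∀ j : ℕ, j ≤ q-1 → 2*(i*q+j*p) < 3*(p*q) := by
    intro j hj
    have hq1 : 1 ≤ q := by omega
    zify [hq1] at hj
    have h1 : (j:ℤ)*p ≤ ((q:ℤ)-1)*p := by
      apply mul_le_mul_of_nonneg_right hj (by positivity)
    have h2 : (2*i:ℤ)*q ≤ (p:ℤ)*q := by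
      have : ((2*i:ℕ):ℤ) ≤ (p:ℤ) := by exact_mod_cast hi2
      apply mul_le_mul_of_nonneg_right _ (by positivity)
      push_cast at this ⊢; linarith
    zify
    push_cast at h1 h2
    nlinarith [h1, h2]
  ext j
  simp only [Finset.mem_filter, Finset.mem_Icc]
  constructor
  · rintro ⟨⟨hj1, hj2⟩, h1, _⟩
    refine ⟨?_, hj2⟩
    rw [Nat.add_one_le_iff, Nat.div_lt_iff_lt_mul hp0]
    exact (key j).mpr h1
  · rintro ⟨hj1, hj2⟩
    rw [Nat.add_one_le_iff, Nat.div_lt_iff_lt_mul hp0] at hj1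
    have hj0 : 1 ≤ j := by
      rcases Nat.eq_zero_or_pos j with h | h
      · simp [h] at hj1
      · exact h
    exact ⟨⟨hj0, hj2⟩, (key j).mp hj1, auto j hj2⟩


lemma per_i_case2 (p q i : ℕ) (hp : 1 < p) (hq : 1 < q) (hi1 : i ≤ p - 1) (hi2 : p < 2*i) :
    (Finset.Icc 1 (q-1)).filter
        (fun j => p*q < 2*(i*q+j*p) ∧ 2*(i*q+j*p) < 3*(p*q))
      = Finset.Icc 1 ((q*(3*p-2*i) - 1)/(2*p)) := by
  have hp0 : 0 < 2*p := by omega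
  have hi3 : 2*i ≤ 3*p := by omega
  have key : ∀ j : ℕ, (j*(2*p) < q*(3*p-2*i)) ↔ 2*(i*q+j*p) < 3*(p*q) := by
    intro j
    zify [hi3]
    constructor <;> intro h <;> nlinarith [h]
  have auto : ∀ j : ℕ, 1 ≤ j → p*q < 2*(i*q+j*p) := by
    intro j hj
    have h2 : (p:ℤ)*q < (2*i:ℤ)*q := by
      have : (p:ℤ) < ((2*i:ℕ):ℤ) := by exact_mod_cast hi2
      push_cast at this
      have hq0 : (0:ℤ) < q := by exact_mod_cast Nat.lt_of_lt_of_le Nat.zero_lt_one hq.le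
      nlinarith [this, hq0]
    zify
    push_cast at h2
    have : (0:ℤ) ≤ (j:ℤ)*p := by positivity
    nlinarith [h2, this]
  have hle : (q*(3*p-2*i) - 1)/(2*p) ≤ q - 1 := by
    have h1 : q*(3*p-2*i) - 1 < q*(2*p) := by
      have h2 : q*(3*p-2*i) ≤ q*(2*p) := by
        apply Nat.mul_le_mul_left
        omega
      have h3 : 0 < q*(2*p) := by positivity
      omega
    have := (Nat.div_lt_iff_lt_mul hp0).mpr h1
    omega
  ext j
  simp only [Finset.mem_filter, Finset.mem_Icc]
  constructor
  · rintro ⟨⟨hj1, hj2⟩, _, h2⟩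
    refine ⟨hj1, ?_⟩
    rw [Nat.le_div_iff_mul_le hp0]
    have := (key j).mpr h2
    omega
  · rintro ⟨hj1, hj2⟩
    rw [Nat.le_div_iff_mul_le hp0] at hj2
    have hjq : j ≤ q - 1 := by
      have h2 : q*(3*p-2*i) ≤ q*(2*p) := Nat.mul_le_mul_left q (by omega)
      have h3 : 0 < q*(2*p) := by positivity
      have h1 : j*(2*p) < q*(2*p) := by omega
      have := Nat.lt_of_mul_lt_mul_right h1
      omega
    refine ⟨⟨hj1, hjq⟩, auto j hj1, (key j).mp ?_⟩
    have h3 : 0 < q*(3*p-2*i) := by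
      have : 0 < 3*p - 2*i := by omega
      positivity
    omega

lemma per_i_bound (p q i : ℕ) (hp : 1 < p) (hq : 1 < q) (hi1 : 1 ≤ i) (hi2 : i ≤ p-1)
    (c : ℕ)
    (hc : c = ((Finset.Icc 1 (q-1)).filter
        (fun j => p*q < 2*(i*q+j*p) ∧ 2*(i*q+j*p) < 3*(p*q))).card) :
    (2*(p:ℤ)*q - 2*p - q*|(p:ℤ) - 2*i| ≤ 2*p*(c:ℤ)) ∧
      (2*(p:ℤ)*(c:ℤ) ≤ 2*(p:ℤ)*q - 2*p - q*|(p:ℤ) - 2*i| + 2*p) := by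
  have hp0 : 0 < 2*p := by omega
  rcases le_or_gt (2*i) p with hcase | hcase
  · -- case 1
    set d := q*(p-2*i)/(2*p) with hd_def
    have habs : |(p:ℤ) - 2*i| = ((p - 2*i : ℕ) : ℤ) := by
      rw [abs_of_nonneg (by omega : (0:ℤ) ≤ (p:ℤ) - 2*i)]
      omega
    have hdm := Nat.div_add_mod (q*(p-2*i)) (2*p)
    have hrm : q*(p-2*i) % (2*p) < 2*p := Nat.mod_lt _ hp0
    have hdq : d < q := by
      rw [hd_def, Nat.div_lt_iff_lt_mul hp0]
      calc q*(p-2*i) ≤ q*p := Nat.mul_le_mul_left q (Nat.sub_le _ _)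
      _ < q*(2*p) := by
        zify
        nlinarith [show (0:ℤ) < p by exact_mod_cast Nat.lt_of_lt_of_le Nat.zero_lt_one hp.le,
          show (0:ℤ) < q by exact_mod_cast Nat.lt_of_lt_of_le Nat.zero_lt_one hq.le]
    rw [hc, per_i_case1 p q i hp hq hi1 hcase, Nat.card_Icc]
    have hq1 : q - 1 + 1 = q := Nat.succ_pred_eq_of_pos (show 0 < q by omega)
    have hcard : (q - 1 + 1 - (d + 1) : ℕ) = q - 1 - d := by
      rw [hq1, Nat.sub_sub, Nat.add_comm]
    rw [hcard]
    have hled : d ≤ q - 1 := Nat.le_sub_one_of_lt hdq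
    have hc' : ((q - 1 - d : ℕ) : ℤ) = (q:ℤ) - 1 - d := by
      rw [Nat.cast_sub hled, Nat.cast_sub (by omega : 1 ≤ q)]
      push_cast
      ring
    rw [hc', habs]
    set r := q*(p-2*i) % (2*p)
    have hdm' : 2*(p:ℤ)*d + r = (q:ℤ) * ((p - 2*i : ℕ) : ℤ) := by exact_mod_cast hdm
    have hrm' : (r:ℤ) < 2*p := by exact_mod_cast hrm
    have hr0 : (0:ℤ) ≤ r := by positivity
    constructor <;> linarith
  · -- case 2
    have h3p : 2*i ≤ 3*p := by omega
    set u := q*(3*p-2*i) with hu_def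
    set e := (u - 1)/(2*p) with he_def
    have habs : |(p:ℤ) - 2*i| = 2*(i:ℤ) - p := by
      rw [abs_of_nonpos (by omega : (p:ℤ) - 2*i ≤ 0)]
      ring
    have hu0 : 0 < u := by
      have h1 : 0 < 3*p - 2*i := by omega
      positivity
    have hucast : ((u:ℕ) : ℤ) = (q:ℤ)*(3*(p:ℤ) - 2*i) := by
      rw [hu_def]
      push_cast [Nat.cast_sub h3p]
      ring
    have hdm := Nat.div_add_mod (u - 1) (2*p)
    have hrm : (u - 1) % (2*p) < 2*p := Nat.mod_lt _ hp0
    rw [hc, per_i_case2 p q i hp hq hi2 hcase, ← hu_def, ← he_def, Nat.card_Icc]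
    have hcard : (e + 1 - 1 : ℕ) = e := by simp
    rw [hcard, habs]
    set r := (u - 1) % (2*p) with hr_def
    rw [← he_def] at hdm
    have hdm' : 2*(p:ℤ)*e + r = (u:ℤ) - 1 := by
      have h1 : ((2*p*e + r : ℕ) : ℤ) = ((u - 1 : ℕ) : ℤ) := congrArg (fun n : ℕ => (n : ℤ)) hdm
      rw [Nat.cast_sub hu0] at h1
      push_cast at h1
      linarith [h1]
    have hrm' : (r:ℤ) < 2*p := by exact_mod_cast hrm
    have hr0 : (0:ℤ) ≤ r := by positivity
    constructor <;> nlinarith [hdm', hrm', hr0, hucast]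

def Sabs (p : ℕ) : ℤ := ∑ i ∈ Finset.range (p-1), |(p:ℤ) - 2*(1+i)|

lemma Sabs_rec (p : ℕ) (hp : 1 ≤ p) : Sabs (p+2) = Sabs p + 2*p := by
  unfold Sabs
  have h1 : p + 2 - 1 = p + 1 := by omega
  have h2 : p - 1 + 1 = p := by omega
  rw [h1, Finset.sum_range_succ]
  push_cast
  have hsplit := Finset.sum_range_succ' (fun x : ℕ => |(p:ℤ) + 2 - 2*(1+(x:ℤ))|) (p-1)
  rw [h2] at hsplit
  rw [hsplit]
  push_cast
  have e1 : ∀ i : ℕ, |(p:ℤ) + 2 - 2*(1+((i:ℤ)+1))| = |(p:ℤ) - 2*(1+(i:ℤ))| := by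
    intro i; congr 1; ring
  simp only [e1]
  have e2 : |(p:ℤ) + 2 - 2*(1+(0:ℤ))| = (p:ℤ) := by
    rw [show ((p:ℤ)+2 - 2*(1+(0:ℤ))) = (p:ℤ) by ring, abs_of_nonneg (by positivity)]
  have e3 : |(p:ℤ) + 2 - 2*(1+(p:ℤ))| = (p:ℤ) := by
    rw [show ((p:ℤ)+2 - 2*(1+(p:ℤ))) = -(p:ℤ) by ring, abs_neg,
      abs_of_nonneg (by positivity)]
  push_cast at e2 e3 ⊢
  rw [e2, e3]
  ring

lemma Sabs_bounds (p : ℕ) : 2 * Sabs p ≤ (p:ℤ)*p ∧ (p:ℤ)*p - 2*p ≤ 2 * Sabs p := by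
  induction p using Nat.strong_induction_on with
  | _ p ih =>
    match p, ih with
    | 0, _ => simp [Sabs]
    | 1, _ => norm_num [Sabs]
    | 2, _ => norm_num [Sabs, Finset.sum_range_succ]
    | (n+3), ih =>
      have hrec := Sabs_rec (n+1) (by omega)
      have hih := ih (n+1) (by omega)
      rw [show n+3 = (n+1)+2 from rfl, hrec]
      push_cast at hih ⊢
      constructor <;> nlinarith [hih.1, hih.2]


lemma core_bound (p q : ℕ) (hp : 1 < p) (hq : 1 < q) :
    |2 * torusSig p q + (p:ℤ)*q| ≤ 8*((p:ℤ)+q) := by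
  have hp0 : (0:ℤ) < p := by exact_mod_cast Nat.lt_of_lt_of_le Nat.zero_lt_one hp.le
  have hq0 : (0:ℤ) < q := by exact_mod_cast Nat.lt_of_lt_of_le Nat.zero_lt_one hq.le
  have hp2 : (2:ℤ) ≤ p := by exact_mod_cast hp
  have hq2 : (2:ℤ) ≤ q := by exact_mod_cast hq
  have hcard : (torusPairs p q).card = (p-1)*(q-1) := by
    unfold torusPairs
    rw [Finset.card_product, Nat.card_Icc, Nat.card_Icc]
    simp
  have hc1 : ((p-1:ℕ):ℤ) = (p:ℤ)-1 := by omega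
  have hc2 : ((q-1:ℕ):ℤ) = (q:ℤ)-1 := by omega
  have hsig : (torusSig p q : ℤ) = ((p:ℤ)-1)*((q:ℤ)-1) - 2*(torusInCount p q : ℤ) := by
    unfold torusSig
    rw [hcard]
    push_cast [hc1, hc2]
    ring
  set N := torusInCount p q with hN_def
  have hsum := count_eq_sum p q (by omega) (by omega)
  have hNcast : (N:ℤ) = ∑ i ∈ Finset.Icc 1 (p-1),
      (((Finset.Icc 1 (q-1)).filter
        (fun j => p*q < 2*(i*q+j*p) ∧ 2*(i*q+j*p) < 3*(p*q))).card : ℤ) := by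
    rw [hN_def, hsum]
    push_cast
    rfl
  have hS : ∑ i ∈ Finset.Icc 1 (p-1), |(p:ℤ) - 2*(i:ℤ)| = Sabs p := by
    have hIcc : Finset.Icc 1 (p-1) = Finset.Ico 1 p := by
      rw [← Finset.Ico_add_one_right_eq_Icc]
      congr 1
      omega
    rw [hIcc, Finset.sum_Ico_eq_sum_range]
    unfold Sabs
    refine Finset.sum_congr rfl (fun i _ => ?_)
    push_cast
    ring_nf
  have hlow : ∑ i ∈ Finset.Icc 1 (p-1), (2*(p:ℤ)*q - 2*p - q*|(p:ℤ)-2*(i:ℤ)|)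
      ≤ ∑ i ∈ Finset.Icc 1 (p-1),
        2*(p:ℤ)*(((Finset.Icc 1 (q-1)).filter
          (fun j => p*q < 2*(i*q+j*p) ∧ 2*(i*q+j*p) < 3*(p*q))).card : ℤ) := by
    apply Finset.sum_le_sum
    intro i hi
    rw [Finset.mem_Icc] at hi
    exact (per_i_bound p q i hp hq hi.1 hi.2 _ rfl).1
  have hup : ∑ i ∈ Finset.Icc 1 (p-1),
        2*(p:ℤ)*(((Finset.Icc 1 (q-1)).filter
          (fun j => p*q < 2*(i*q+j*p) ∧ 2*(i*q+j*p) < 3*(p*q))).card : ℤ)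
      ≤ ∑ i ∈ Finset.Icc 1 (p-1), (2*(p:ℤ)*q - 2*p - q*|(p:ℤ)-2*(i:ℤ)| + 2*p) := by
    apply Finset.sum_le_sum
    intro i hi
    rw [Finset.mem_Icc] at hi
    exact (per_i_bound p q i hp hq hi.1 hi.2 _ rfl).2
  have hTsum : ∀ (z : ℤ), ∑ i ∈ Finset.Icc 1 (p-1), (2*(p:ℤ)*q - 2*p - q*|(p:ℤ)-2*(i:ℤ)| + z)
      = ((p:ℤ)-1)*(2*(p:ℤ)*q - 2*p + z) - q * Sabs p := by
    intro z
    rw [Finset.sum_add_distrib, Finset.sum_sub_distrib, Finset.sum_const, Finset.sum_const,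
      ← Finset.mul_sum, hS, Nat.card_Icc]
    have : (p - 1 + 1 - 1 : ℕ) = p - 1 := by omega
    rw [this, nsmul_eq_mul, nsmul_eq_mul, hc1]
    ring
  have hT0 : ∑ i ∈ Finset.Icc 1 (p-1), (2*(p:ℤ)*q - 2*p - q*|(p:ℤ)-2*(i:ℤ)|)
      = ((p:ℤ)-1)*(2*(p:ℤ)*q - 2*p) - q * Sabs p := by
    have := hTsum 0
    simp only [add_zero] at this
    exact this
  have hmulsum : ∑ i ∈ Finset.Icc 1 (p-1),
        2*(p:ℤ)*(((Finset.Icc 1 (q-1)).filter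
          (fun j => p*q < 2*(i*q+j*p) ∧ 2*(i*q+j*p) < 3*(p*q))).card : ℤ)
      = 2*(p:ℤ)*(N:ℤ) := by
    rw [hNcast, Finset.mul_sum]
  rw [hT0, hmulsum] at hlow
  rw [hmulsum, hTsum (2*(p:ℤ))] at hup
  obtain ⟨hS1, hS2⟩ := Sabs_bounds p
  have hQS1 : (q:ℤ)*(2*Sabs p) ≤ (q:ℤ)*((p:ℤ)*p) := by
    apply mul_le_mul_of_nonneg_left hS1 (le_of_lt hq0)
  have hQS2 : (q:ℤ)*((p:ℤ)*p - 2*p) ≤ (q:ℤ)*(2*Sabs p) := by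
    apply mul_le_mul_of_nonneg_left hS2 (le_of_lt hq0)
  rw [hsig, abs_le]
  constructor
  · have hmul : (p:ℤ) * (-(8*((p:ℤ)+q))) ≤
        (p:ℤ) * (2*(((p:ℤ)-1)*((q:ℤ)-1) - 2*(N:ℤ)) + (p:ℤ)*q) := by
      linarith [hup, hQS2, hp2, hq2, mul_pos hp0 hq0, mul_pos hp0 hp0]
    have := le_of_mul_le_mul_left hmul hp0
    linarith
  · have hmul : (p:ℤ) * (2*(((p:ℤ)-1)*((q:ℤ)-1) - 2*(N:ℤ)) + (p:ℤ)*q) ≤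
        (p:ℤ) * (8*((p:ℤ)+q)) := by
      linarith [hlow, hQS1, hp2, hq2, mul_pos hp0 hq0, mul_pos hp0 hp0]
    have := le_of_mul_le_mul_left hmul hp0
    linarith

theorem stmt_3 :
    ∃ C : ℝ, ∀ p q : ℕ, 1 < p → 1 < q → Nat.Coprime p q →
      |(torusSig p q : ℝ) + (p : ℝ) * q / 2| ≤ C * ((p : ℝ) + q) := by
  use 4
  intro p q hp hq _
  have hcore := core_bound p q hp hq
  have hcast : ((|2 * torusSig p q + (p:ℤ)*q| : ℤ) : ℝ) ≤ ((8*((p:ℤ)+q) : ℤ) : ℝ) := by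
    exact_mod_cast hcore
  rw [Int.cast_abs] at hcast
  push_cast at hcast
  have heq : (torusSig p q : ℝ) + (p : ℝ) * q / 2
      = (2*(torusSig p q : ℝ) + (p:ℝ)*q) / 2 := by ring
  rw [heq, abs_div, abs_of_nonneg (by norm_num : (0:ℝ) ≤ 2)]
  linarith [hcast]
end
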